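/- As t ↑ T with x ∈ G^c fixed, the weight g_{α(x)}(t,x) of the unique nearest lattice point α(x) converges to 1, and consequently the h-transform drift Σ_{y ∈ π^{-1}(a)} g_y(t,x)(y − x)/(T − t) is asymptotically equivalent to the proposal drift (α(x) − x)/(T − t): their difference times (T − t) tends to 0. -/

import Mathlib

noncomputable section
open Classical Filter

/-- The plane with the Euclidean norm. -/
abbrev E2 := EuclideanSpace ℝ (Fin 2)

/-- The lattice-translate point `a + (m,n)` for `(m,n) ∈ ℤ²`. -/
def lpt (a : E2) (mn : ℤ × ℤ) : E2 :=
  a + (EuclideanSpace.equiv (Fin 2) ℝ).symm ![(mn.1 : ℝ), (mn.2 : ℝ)]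

/-- The preimage `π⁻¹(a)` as a set. -/
def latt (a : E2) : Set E2 := Set.range (lpt a)

/-- The set `G` of points of `ℝ²` whose nearest point in `π⁻¹(a)` is not unique. -/
def G (a : E2) : Set E2 :=
  {x | ¬ ∃! y, y ∈ latt a ∧ ∀ z ∈ latt a, ‖y - x‖ ≤ ‖z - x‖}

/-- The nearest-point map `α`. -/
def alphaMap (a : E2) (x : E2) : E2 :=
  Classical.epsilon (fun y => y ∈ latt a ∧ ∀ z ∈ latt a, ‖y - x‖ ≤ ‖z - x‖)

/-- The Gaussian lattice sum `Σ_{y ∈ π⁻¹(a)} exp(-‖y-x‖²/(2σ²(T-t)))`. -/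
def Zsum (a : E2) (σ T t : ℝ) (x : E2) : ℝ :=
  ∑' mn : ℤ × ℤ, Real.exp (-‖lpt a mn - x‖^2 / (2 * σ^2 * (T - t)))

/-- The weight `g_y(t,x)` of the lattice point `y`. -/
def gpt (a : E2) (σ T : ℝ) (y : E2) (t : ℝ) (x : E2) : ℝ :=
  Real.exp (-‖y - x‖^2 / (2 * σ^2 * (T - t))) / Zsum a σ T t x

/-!
The weights `g_y(t, x)` form a Gibbs distribution on the lattice with energy `‖y - x‖²` at
temperature `s = 2σ²(T - t)`, which tends to `0⁺` as `t ↑ T`. Shifting the energy by its value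
at the unique minimiser `α(x)` does not change the weights and makes the energy vanish at `α(x)`
and be positive elsewhere, so each Boltzmann factor `exp (-energy / s)` tends to the indicator of
`α(x)`. For `s ≤ 1` the factors are dominated by the summable Gaussian `exp (-energy)`, so by
dominated convergence the partition function tends to `1` and the Boltzmann-weighted sum of
`y - x` tends to `α(x) - x`.
-/

open Real Topology

-- `gpt a σ T (lpt a mn) t x` is `gibbsWeight (fun mn => ‖lpt a mn - x‖ ^ 2) (2 * σ ^ 2 * (T - t)) mn`.
def gibbsWeight {ι : Type*} (f : ι → ℝ) (s : ℝ) (i : ι) : ℝ :=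
  exp (-f i / s) / ∑' j, exp (-f j / s)

lemma gibbsWeight_sub_const {ι : Type*} (f : ι → ℝ) (c s : ℝ) :
    gibbsWeight (fun i => f i - c) s = gibbsWeight f s := by
  have h : ∀ i, exp (-(f i - c) / s) = exp (c / s) * exp (-f i / s) := fun i => by
    rw [← exp_add]
    ring_nf
  ext i
  simp only [gibbsWeight, h, tsum_mul_left]
  exact mul_div_mul_left _ _ (exp_ne_zero _)

lemma tendsto_exp_neg_div_nhdsGT_zero {c : ℝ} (hc : 0 < c) :
    Tendsto (fun s => exp (-c / s)) (𝓝[>] 0) (𝓝 0) := by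
  have h : Tendsto (fun s : ℝ => -c * s⁻¹) (𝓝[>] 0) atBot :=
    tendsto_inv_nhdsGT_zero.const_mul_atTop_of_neg (neg_lt_zero.mpr hc)
  simp only [div_eq_mul_inv]
  exact tendsto_exp_atBot.comp h

section Gibbs

variable {ι E : Type*} [NormedAddCommGroup E] [NormedSpace ℝ E] [CompleteSpace E]
  {f : ι → ℝ} {i₀ : ι} {v : ι → E}

lemma tendsto_tsum_exp_neg_div_smul (hf₀ : f i₀ = 0) (hpos : ∀ i ≠ i₀, 0 < f i)
    (hv : Summable fun i => exp (-f i) * ‖v i‖) :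
    Tendsto (fun s => ∑' i, exp (-f i / s) • v i) (𝓝[>] 0) (𝓝 (v i₀)) := by
  have hlim : ∀ i, Tendsto (fun s => exp (-f i / s) • v i) (𝓝[>] 0)
      (𝓝 (if i = i₀ then v i₀ else 0)) := by
    intro i
    split_ifs with hi
    · subst hi
      simp only [hf₀, neg_zero, zero_div, exp_zero, one_smul, tendsto_const_nhds]
    · simpa only [zero_smul] using
        (tendsto_exp_neg_div_nhdsGT_zero (hpos i hi)).smul_const (v i)
  have hbound : ∀ᶠ s in 𝓝[>] 0, ∀ i, ‖exp (-f i / s) • v i‖ ≤ exp (-f i) * ‖v i‖ := by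
    filter_upwards [Ioo_mem_nhdsGT zero_lt_one] with s ⟨hs₀, hs₁⟩ i
    have hfi : 0 ≤ f i := by
      rcases eq_or_ne i i₀ with rfl | hi
      · exact hf₀.ge
      · exact (hpos i hi).le
    rw [norm_smul, norm_of_nonneg (exp_nonneg _)]
    gcongr
    rw [neg_div, neg_le_neg_iff]
    exact le_div_self hfi hs₀ hs₁.le
  simpa only [tsum_ite_eq] using tendsto_tsum_of_dominated_convergence hv hlim hbound

lemma summable_exp_neg_sub_mul {w : ι → ℝ} (c : ℝ) (hw : Summable fun i => exp (-f i) * w i) :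
    Summable fun i => exp (-(f i - c)) * w i := by
  refine (hw.mul_left (exp c)).congr fun i => ?_
  rw [← mul_assoc, ← exp_add]
  ring_nf

lemma tendsto_tsum_exp_neg_sub_div (hmin : ∀ i ≠ i₀, f i₀ < f i)
    (hsum : Summable fun i => exp (-f i)) :
    Tendsto (fun s => ∑' i, exp (-(f i - f i₀) / s)) (𝓝[>] 0) (𝓝 1) := by
  simpa only [smul_eq_mul, mul_one] using
    tendsto_tsum_exp_neg_div_smul (f := fun i => f i - f i₀) (v := fun _ => (1 : ℝ)) (sub_self _)
      (fun i hi => sub_pos.mpr (hmin i hi))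
      (by simpa using summable_exp_neg_sub_mul (w := fun _ => (1 : ℝ)) (f i₀) (by simpa using hsum))

lemma tendsto_gibbsWeight_self (hmin : ∀ i ≠ i₀, f i₀ < f i)
    (hsum : Summable fun i => exp (-f i)) :
    Tendsto (fun s => gibbsWeight f s i₀) (𝓝[>] 0) (𝓝 1) := by
  simp only [← gibbsWeight_sub_const f (f i₀)]
  simpa [gibbsWeight] using (tendsto_tsum_exp_neg_sub_div hmin hsum).inv₀ one_ne_zero

lemma tendsto_tsum_gibbsWeight_smul (hmin : ∀ i ≠ i₀, f i₀ < f i)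
    (hsum : Summable fun i => exp (-f i)) (hv : Summable fun i => exp (-f i) * ‖v i‖) :
    Tendsto (fun s => ∑' i, gibbsWeight f s i • v i) (𝓝[>] 0) (𝓝 (v i₀)) := by
  simp only [← gibbsWeight_sub_const f (f i₀)]
  have hZ := tendsto_tsum_exp_neg_sub_div hmin hsum
  have hN := tendsto_tsum_exp_neg_div_smul (f := fun i => f i - f i₀) (sub_self _)
    (fun i hi => sub_pos.mpr (hmin i hi)) (summable_exp_neg_sub_mul (f i₀) hv)
  simpa only [gibbsWeight, div_eq_inv_mul, mul_smul, tsum_const_smul'', inv_one, one_smul]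
    using (hZ.inv₀ one_ne_zero).smul hN

end Gibbs

lemma tendsto_const_mul_sub_nhdsLT {c : ℝ} (hc : 0 < c) (T : ℝ) :
    Tendsto (fun t => c * (T - t)) (𝓝[<] T) (𝓝[>] 0) := by
  refine tendsto_nhdsWithin_iff.mpr ⟨?_, eventually_nhdsWithin_of_forall fun t ht =>
    mul_pos hc (sub_pos.mpr ht)⟩
  exact ((continuous_const.mul (continuous_const.sub continuous_id)).tendsto' T 0
    (by simp)).mono_left nhdsWithin_le_nhds

lemma summable_pow_abs_int_add_mul_exp (k : ℕ) (b : ℝ) {c : ℝ} (hc : 0 < c) :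
    Summable fun m : ℤ => |m + b| ^ k * exp (-c * (m + b) ^ 2) := by
  refine (HurwitzKernelBounds.summable_f_int k b (div_pos hc pi_pos)).congr fun m => ?_
  simp only [HurwitzKernelBounds.f_int]
  congr 2
  field_simp

lemma norm_sq_eq_sq_add_sq (w : E2) : ‖w‖ ^ 2 = w 0 ^ 2 + w 1 ^ 2 := by
  simp [EuclideanSpace.norm_sq_eq, Fin.sum_univ_two]

lemma norm_le_abs_add_abs (w : E2) : ‖w‖ ≤ |w 0| + |w 1| := by
  refine (pow_le_pow_iff_left₀ (norm_nonneg w) (by positivity) two_ne_zero).mp ?_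
  rw [norm_sq_eq_sq_add_sq]
  nlinarith [abs_nonneg (w 0), abs_nonneg (w 1), sq_abs (w 0), sq_abs (w 1)]

lemma lpt_injective (a : E2) : Function.Injective (lpt a) := by
  intro p q h
  have h₀ := congrArg (· 0) h
  have h₁ := congrArg (· 1) h
  simp only [lpt, PiLp.continuousLinearEquiv_symm_apply, PiLp.add_apply, Matrix.cons_val_zero,
    Matrix.cons_val_one, Matrix.cons_val_fin_one, add_right_inj, Int.cast_inj] at h₀ h₁
  exact Prod.ext h₀ h₁

lemma lpt_sub_apply_zero (a x : E2) (mn : ℤ × ℤ) : (lpt a mn - x) 0 = mn.1 + (a 0 - x 0) := by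
  show a 0 + mn.1 - x 0 = _
  ring

lemma lpt_sub_apply_one (a x : E2) (mn : ℤ × ℤ) : (lpt a mn - x) 1 = mn.2 + (a 1 - x 1) := by
  show a 1 + mn.2 - x 1 = _
  ring

lemma exp_neg_mul_norm_lpt_sub_sq (a x : E2) (c : ℝ) (mn : ℤ × ℤ) :
    exp (-c * ‖lpt a mn - x‖ ^ 2) =
      exp (-c * (mn.1 + (a 0 - x 0)) ^ 2) * exp (-c * (mn.2 + (a 1 - x 1)) ^ 2) := by
  rw [norm_sq_eq_sq_add_sq, lpt_sub_apply_zero, lpt_sub_apply_one, ← exp_add]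
  ring_nf

lemma summable_exp_neg_mul_norm_lpt_sub_sq (a x : E2) {c : ℝ} (hc : 0 < c) :
    Summable fun mn => exp (-c * ‖lpt a mn - x‖ ^ 2) := by
  simp only [exp_neg_mul_norm_lpt_sub_sq]
  simpa using (summable_pow_abs_int_add_mul_exp 0 (a 0 - x 0) hc).mul_of_nonneg
    (summable_pow_abs_int_add_mul_exp 0 (a 1 - x 1) hc)
    (fun _ => by positivity) (fun _ => by positivity)

lemma summable_exp_neg_mul_norm_lpt_sub_sq_mul_norm (a x : E2) {c : ℝ} (hc : 0 < c) :
    Summable fun mn => exp (-c * ‖lpt a mn - x‖ ^ 2) * ‖lpt a mn - x‖ := by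
  have h₀ := summable_pow_abs_int_add_mul_exp 0 (a 0 - x 0) hc
  have h₁ := summable_pow_abs_int_add_mul_exp 1 (a 0 - x 0) hc
  have k₀ := summable_pow_abs_int_add_mul_exp 0 (a 1 - x 1) hc
  have k₁ := summable_pow_abs_int_add_mul_exp 1 (a 1 - x 1) hc
  refine Summable.of_nonneg_of_le (fun _ => by positivity) (fun mn => ?_)
    ((h₁.mul_of_nonneg k₀ (fun _ => by positivity) (fun _ => by positivity)).add
      (h₀.mul_of_nonneg k₁ (fun _ => by positivity) (fun _ => by positivity)))
  have hw := norm_le_abs_add_abs (lpt a mn - x)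
  rw [lpt_sub_apply_zero, lpt_sub_apply_one] at hw
  simp only [exp_neg_mul_norm_lpt_sub_sq, pow_zero, pow_one, one_mul]
  calc _ ≤ exp (-c * (mn.1 + (a 0 - x 0)) ^ 2) * exp (-c * (mn.2 + (a 1 - x 1)) ^ 2) *
        (|mn.1 + (a 0 - x 0)| + |mn.2 + (a 1 - x 1)|) := by gcongr
    _ = _ := by ring

lemma alphaMap_spec {a x : E2} (hx : x ∉ G a) :
    alphaMap a x ∈ latt a ∧ ∀ z ∈ latt a, ‖alphaMap a x - x‖ ≤ ‖z - x‖ :=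
  Classical.epsilon_spec (not_not.mp hx).exists

lemma norm_alphaMap_sub_lt {a x z : E2} (hx : x ∉ G a) (hz : z ∈ latt a)
    (hne : z ≠ alphaMap a x) : ‖alphaMap a x - x‖ < ‖z - x‖ := by
  obtain ⟨hα, hmin⟩ := alphaMap_spec hx
  refine (hmin z hz).lt_of_ne fun h => hne ?_
  exact (not_not.mp hx).unique ⟨hz, fun w hw => h ▸ hmin w hw⟩ ⟨hα, hmin⟩

lemma exists_lpt_eq_alphaMap {a x : E2} (hx : x ∉ G a) :
    ∃ mn₀, lpt a mn₀ = alphaMap a x ∧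
      ∀ mn ≠ mn₀, ‖lpt a mn₀ - x‖ ^ 2 < ‖lpt a mn - x‖ ^ 2 := by
  obtain ⟨mn₀, hmn₀⟩ := (alphaMap_spec hx).1
  refine ⟨mn₀, hmn₀, fun mn hmn => ?_⟩
  rw [hmn₀]
  exact pow_lt_pow_left₀ (norm_alphaMap_sub_lt hx ⟨mn, rfl⟩
    (hmn₀ ▸ (lpt_injective a).ne hmn)) (norm_nonneg _) two_ne_zero

theorem stmt15_general (a : E2) (σ T : ℝ) (hσ : 0 < σ) (x : E2) (hx : x ∉ G a) :
    Tendsto (fun t => gpt a σ T (alphaMap a x) t x)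
      (nhdsWithin T (Set.Iio T)) (nhds 1) ∧
    Tendsto (fun t =>
        (∑' mn : ℤ × ℤ, gpt a σ T (lpt a mn) t x • (lpt a mn - x))
          - (alphaMap a x - x))
      (nhdsWithin T (Set.Iio T)) (nhds 0) := by
  obtain ⟨mn₀, hα, hmin⟩ := exists_lpt_eq_alphaMap hx
  have hs := tendsto_const_mul_sub_nhdsLT (by positivity : 0 < 2 * σ ^ 2) T
  have hsum := summable_exp_neg_mul_norm_lpt_sub_sq a x one_pos
  have hv := summable_exp_neg_mul_norm_lpt_sub_sq_mul_norm a x one_pos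
  simp only [neg_mul, one_mul] at hsum hv
  rw [← hα]
  refine ⟨(tendsto_gibbsWeight_self hmin hsum).comp hs, ?_⟩
  have h := ((tendsto_tsum_gibbsWeight_smul (v := fun mn => lpt a mn - x) hmin hsum hv).comp
    hs).sub_const (lpt a mn₀ - x)
  rwa [sub_self] at h

/-- for fixed `x ∈ Gᶜ`, as `t ↑ T` the weight `g_{α(x)}(t,x)` of the
unique nearest lattice point tends to `1`, and the difference between the
`h`-transform drift `Σ_y g_y(t,x)(y-x)/(T-t)` and the proposal drift
`(α(x)-x)/(T-t)`, multiplied by `(T-t)`, tends to `0`. -/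
theorem stmt15 (a : E2) (σ T : ℝ) (hσ : 0 < σ) (hT : 0 < T) (x : E2) (hx : x ∉ G a) :
    Tendsto (fun t => gpt a σ T (alphaMap a x) t x)
      (nhdsWithin T (Set.Iio T)) (nhds 1) ∧
    Tendsto (fun t =>
        (∑' mn : ℤ × ℤ, gpt a σ T (lpt a mn) t x • (lpt a mn - x))
          - (alphaMap a x - x))
      (nhdsWithin T (Set.Iio T)) (nhds 0) :=
  stmt15_general a σ T hσ x hx
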